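/- Statically ordered logic programs satisfy Principle I: if (Π, <) is a statically ordered program, X₁ and X₂ are two (regular) answer sets of Π generated by R ∪ {r₁} and R ∪ {r₂} respectively (where r₁, r₂ ∉ R), and r₁ < r₂, then X₁ is not a preferred answer set of (Π, <). -/

import Mathlib

attribute [local instance] Classical.propDecidable

/-! ## Basic framework: extended logic programs under answer set semantics -/

/-- A literal: an atom or a classically negated atom. -/
inductive Lit (σ : Type) : Type
  | pos (a : σ)
  | neg (a : σ)
  deriving DecidableEq

/-- An extended rule: head ← pbody, not nbody. -/
structure Rule (σ : Type) : Type where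
  head : Lit σ
  pbody : Set (Lit σ)
  nbody : Set (Lit σ)

/-- A set of literals is consistent iff it contains no complementary pair. -/
def Consistent {σ : Type} (X : Set (Lit σ)) : Prop :=
  ∀ a : σ, ¬ (Lit.pos a ∈ X ∧ Lit.neg a ∈ X)

/-- Logically closed: consistent or all literals. -/
def LogClosed {σ : Type} (X : Set (Lit σ)) : Prop :=
  Consistent X ∨ X = Set.univ

/-- A program is basic if no rule has weakly negated body literals. -/
def Basic {σ : Type} (P : Set (Rule σ)) : Prop :=
  ∀ r ∈ P, r.nbody = ∅

/-- Closure of a set of literals under a (basic) program. -/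
def ClosedUnder {σ : Type} (P : Set (Rule σ)) (X : Set (Lit σ)) : Prop :=
  ∀ r ∈ P, r.pbody ⊆ X → r.head ∈ X

/-- Th(P): smallest logically closed set closed under the basic program P. -/
def Th {σ : Type} (P : Set (Rule σ)) : Set (Lit σ) :=
  ⋂₀ {X | LogClosed X ∧ ClosedUnder P X}

/-- The immediate consequence operator T_P. -/
noncomputable def TOp {σ : Type} (P : Set (Rule σ)) (X : Set (Lit σ)) : Set (Lit σ) :=
  if _ : Consistent X then {L | ∃ r ∈ P, r.pbody ⊆ X ∧ r.head = L} else Set.univ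

/-- Iterates of the immediate consequence operator, starting from a given set. -/
def TIter {σ : Type} (P : Set (Rule σ)) (X : Set (Lit σ)) : ℕ → Set (Lit σ)
  | 0 => X
  | (i+1) => TOp P (TIter P X i)

/-- Rule r is defeated by X iff nbody(r) ∩ X ≠ ∅. -/
def Defeated {σ : Type} (r : Rule σ) (X : Set (Lit σ)) : Prop :=
  (r.nbody ∩ X).Nonempty

/-- The basic rule r⁺ obtained by deleting all weakly negated body literals. -/
def reductRule {σ : Type} (r : Rule σ) : Rule σ :=
  ⟨r.head, r.pbody, ∅⟩

/-- The Gelfond–Lifschitz reduct of P relative to X. -/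
def Reduct {σ : Type} (P : Set (Rule σ)) (X : Set (Lit σ)) : Set (Rule σ) :=
  {r' | ∃ r ∈ P, ¬ Defeated r X ∧ r' = reductRule r}

/-- X is an answer set of P iff Th(Pˣ) = X. -/
def AnswerSet {σ : Type} (P : Set (Rule σ)) (X : Set (Lit σ)) : Prop :=
  Th (Reduct P X) = X

/-- Generating rules of an answer set X from P. -/
def GR {σ : Type} (P : Set (Rule σ)) (X : Set (Lit σ)) : Set (Rule σ) :=
  {r | r ∈ P ∧ ¬ Defeated r X ∧ r.pbody ⊆ X}

/-- An enumeration of a set of rules. -/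
def IsEnum {σ I : Type} (e : I → Rule σ) (S : Set (Rule σ)) : Prop :=
  Function.Injective e ∧ Set.range e = S

/-- A grounded sequence of rules. -/
def Grounded {σ I : Type} [LT I] (e : I → Rule σ) : Prop :=
  ∀ i : I, ¬ Consistent {L | ∃ j < i, (e j).head = L} ∨
    (e i).pbody ⊆ {L | ∃ j < i, (e j).head = L}
/-! ## Ordered logic programs and the translation 𝒯 -/

/-- Atoms of the language of an ordered program: regular atoms from `α`
plus preference atoms `s ≺ t` over names from `N`. -/
abbrev OAtom (α N : Type) : Type := α ⊕ (N × N)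

/-- Atoms of the extended language ℒ⁺ of the translated program:
the original atoms plus the control atoms ap, bl, ok, ok'. -/
inductive XAtom (α N : Type) : Type
  | base (a : α)
  | prec (s t : N)
  | ap (s : N)
  | bl (s : N)
  | ok (s : N)
  | ok2 (s t : N)

/-- Map literals along a map of atoms. -/
def Lit.map {σ σ' : Type} (f : σ → σ') : Lit σ → Lit σ'
  | .pos a => .pos (f a)
  | .neg a => .neg (f a)

/-- Embedding of the atoms of the ordered program into the extended language. -/
def embAtom {α N : Type} : OAtom α N → XAtom α N
  | Sum.inl a => .base a
  | Sum.inr (s, t) => .prec s t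

/-- Embedding of literals of ℒ into ℒ⁺. -/
def embLit {α N : Type} : Lit (OAtom α N) → Lit (XAtom α N) :=
  Lit.map embAtom

/-- An ordered logic program: rules over ℒ together with an
(injective) naming function. -/
structure OProgram (α N : Type) : Type where
  rules : Set (Rule (OAtom α N))
  nm : Rule (OAtom α N) → N
  inj : Set.InjOn nm rules

section Translation

variable {α N : Type}

/-- The preference literal n ≺ n' in the translated language. -/
def pLit (s t : N) : Lit (XAtom α N) := .pos (.prec s t)

/-- a1(r) : head(r) ← ap(n_r). -/
def a1 (nm : Rule (OAtom α N) → N) (r : Rule (OAtom α N)) : Rule (XAtom α N) :=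
  ⟨embLit r.head, {.pos (.ap (nm r))}, ∅⟩

/-- a2(r) : ap(n_r) ← ok(n_r), body(r). -/
def a2 (nm : Rule (OAtom α N) → N) (r : Rule (OAtom α N)) : Rule (XAtom α N) :=
  ⟨.pos (.ap (nm r)), insert (.pos (.ok (nm r))) (embLit '' r.pbody), embLit '' r.nbody⟩

/-- b1(r, L⁺) : bl(n_r) ← ok(n_r), not L⁺, for L⁺ ∈ body⁺(r). -/
def b1 (nm : Rule (OAtom α N) → N) (r : Rule (OAtom α N)) (L : Lit (OAtom α N)) :
    Rule (XAtom α N) :=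
  ⟨.pos (.bl (nm r)), {.pos (.ok (nm r))}, {embLit L}⟩

/-- b2(r, L⁻) : bl(n_r) ← ok(n_r), L⁻, for L⁻ ∈ body⁻(r). -/
def b2 (nm : Rule (OAtom α N) → N) (r : Rule (OAtom α N)) (L : Lit (OAtom α N)) :
    Rule (XAtom α N) :=
  ⟨.pos (.bl (nm r)), {.pos (.ok (nm r)), embLit L}, ∅⟩

/-- c1(r) : ok(n_r) ← ok'(n_r, n_{r₁}), …, ok'(n_r, n_{r_k}). -/
def c1 (P : Set (Rule (OAtom α N))) (nm : Rule (OAtom α N) → N)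
    (r : Rule (OAtom α N)) : Rule (XAtom α N) :=
  ⟨.pos (.ok (nm r)), {L | ∃ r' ∈ P, L = .pos (.ok2 (nm r) (nm r'))}, ∅⟩

/-- c2(r, r') : ok'(n_r, n_{r'}) ← not (n_r ≺ n_{r'}). -/
def c2 (nm : Rule (OAtom α N) → N) (r r' : Rule (OAtom α N)) : Rule (XAtom α N) :=
  ⟨.pos (.ok2 (nm r) (nm r')), ∅, {pLit (nm r) (nm r')}⟩

/-- c3(r, r') : ok'(n_r, n_{r'}) ← (n_r ≺ n_{r'}), ap(n_{r'}). -/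
def c3 (nm : Rule (OAtom α N) → N) (r r' : Rule (OAtom α N)) : Rule (XAtom α N) :=
  ⟨.pos (.ok2 (nm r) (nm r')), {pLit (nm r) (nm r'), .pos (.ap (nm r'))}, ∅⟩

/-- c4(r, r') : ok'(n_r, n_{r'}) ← (n_r ≺ n_{r'}), bl(n_{r'}). -/
def c4 (nm : Rule (OAtom α N) → N) (r r' : Rule (OAtom α N)) : Rule (XAtom α N) :=
  ⟨.pos (.ok2 (nm r) (nm r')), {pLit (nm r) (nm r'), .pos (.bl (nm r'))}, ∅⟩

/-- t(r, r', r'') : (n_r ≺ n_{r''}) ← (n_r ≺ n_{r'}), (n_{r'} ≺ n_{r''}). -/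
def trR (nm : Rule (OAtom α N) → N) (r r' r'' : Rule (OAtom α N)) : Rule (XAtom α N) :=
  ⟨pLit (nm r) (nm r''), {pLit (nm r) (nm r'), pLit (nm r') (nm r'')}, ∅⟩

/-- as(r, r') : ¬(n_{r'} ≺ n_r) ← (n_r ≺ n_{r'}). -/
def asR (nm : Rule (OAtom α N) → N) (r r' : Rule (OAtom α N)) : Rule (XAtom α N) :=
  ⟨.neg (.prec (nm r') (nm r)), {pLit (nm r) (nm r')}, ∅⟩

/-- The translation 𝒯 of an ordered logic program. -/
def Tsl (P : OProgram α N) : Set (Rule (XAtom α N)) :=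
  {R | ∃ r ∈ P.rules,
      R = a1 P.nm r ∨ R = a2 P.nm r ∨ R = c1 P.rules P.nm r ∨
      (∃ L ∈ r.pbody, R = b1 P.nm r L) ∨ (∃ L ∈ r.nbody, R = b2 P.nm r L) ∨
      (∃ r' ∈ P.rules,
        R = c2 P.nm r r' ∨ R = c3 P.nm r r' ∨ R = c4 P.nm r r' ∨ R = asR P.nm r r' ∨
        (∃ r'' ∈ P.rules, R = trR P.nm r r' r''))}

/-- X is a preferred answer set of the ordered program P iff
X = Y ∩ ℒ for some answer set Y of 𝒯(P). -/
def PreferredAS (P : OProgram α N) (X : Set (Lit (OAtom α N))) : Prop :=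
  ∃ Y : Set (Lit (XAtom α N)), AnswerSet (Tsl P) Y ∧ X = embLit ⁻¹' Y

/-- A literal over ℒ mentions no preference atom. -/
def PrecFree (L : Lit (OAtom α N)) : Prop :=
  ∃ a : α, L = .pos (Sum.inl a) ∨ L = .neg (Sum.inl a)

/-- A rule over ℒ mentions no preference atom. -/
def PrecFreeRule (r : Rule (OAtom α N)) : Prop :=
  PrecFree r.head ∧ (∀ L ∈ r.pbody, PrecFree L) ∧ (∀ L ∈ r.nbody, PrecFree L)

/-- The fact (n_r ≺ n_{r'}) ← . -/
def precFact (nm : Rule (OAtom α N) → N) (r r' : Rule (OAtom α N)) :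
    Rule (OAtom α N) :=
  ⟨.pos (Sum.inr (nm r, nm r')), ∅, ∅⟩

/-- The statically ordered program (Π, <) viewed as the ordered program
Π ∪ { (n_r ≺ n_{r'}) ← ∣ r < r' }. -/
def statProgram (P : Set (Rule (OAtom α N))) (lt : Rule (OAtom α N) → Rule (OAtom α N) → Prop)
    (nm : Rule (OAtom α N) → N)
    (hinj : Set.InjOn nm (P ∪ {s | ∃ r ∈ P, ∃ r' ∈ P, lt r r' ∧ s = precFact nm r r'})) :
    OProgram α N :=
  ⟨P ∪ {s | ∃ r ∈ P, ∃ r' ∈ P, lt r r' ∧ s = precFact nm r r'}, nm, hinj⟩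

/-- X is a preferred answer set of the statically ordered program (Π, <):
X is the restriction to the original (preference-free) language ℒ of an
answer set of the translation of Π ∪ { (n_r ≺ n_{r'}) ← ∣ r < r' }. -/
def StatPreferredAS (P : Set (Rule (OAtom α N)))
    (lt : Rule (OAtom α N) → Rule (OAtom α N) → Prop)
    (nm : Rule (OAtom α N) → N)
    (hinj : Set.InjOn nm (P ∪ {s | ∃ r ∈ P, ∃ r' ∈ P, lt r r' ∧ s = precFact nm r r'}))
    (X : Set (Lit (OAtom α N))) : Prop :=
  ∃ Y : Set (Lit (XAtom α N)),
    AnswerSet (Tsl (statProgram P lt nm hinj)) Y ∧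
    X = {L | PrecFree L ∧ embLit L ∈ Y}

/-- The relation ≺_X induced on rules by a set X of literals of ℒ⁺. -/
def PrecRel (nm : Rule (OAtom α N) → N) (X : Set (Lit (XAtom α N)))
    (r r' : Rule (OAtom α N)) : Prop :=
  pLit (nm r) (nm r') ∈ X

/-- An answer set X of Π is <-preserving. -/
def PreservingAS (P : Set (Rule (OAtom α N)))
    (lt : Rule (OAtom α N) → Rule (OAtom α N) → Prop)
    (X : Set (Lit (OAtom α N))) : Prop :=
  AnswerSet P X ∧
    (¬ Consistent X ∨
      ∃ (I : Type) (_ : LinearOrder I) (e : I → Rule (OAtom α N)),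
        IsEnum e (GR P X) ∧ Grounded e ∧
        (∀ i j : I, lt (e i) (e j) → j < i) ∧
        (∀ i : I, ∀ r' : Rule (OAtom α N), r' ∈ P \ GR P X → lt (e i) r' →
          ¬ (r'.pbody ⊆ X) ∨ Defeated r' {L | ∃ j < i, (e j).head = L}))

/-- The rule r, viewed as a rule of the extended language ℒ⁺. -/
def embRule {α N : Type} (r : Rule (OAtom α N)) : Rule (XAtom α N) :=
  ⟨embLit r.head, embLit '' r.pbody, embLit '' r.nbody⟩

/-- An ordered program has only static preferences: every rule either mentions
no preference atom at all, or is a fact (n ≺ n') ← . -/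
def StaticallyOrdered {α N : Type} (P : OProgram α N) : Prop :=
  ∀ r ∈ P.rules, PrecFreeRule r ∨ ∃ s t : N, r = ⟨.pos (Sum.inr (s, t)), ∅, ∅⟩

end Translation

/-!
Let `Y` be an answer set of the translation with `X1 = Y ∩ ℒ`. Comparing the generating rules
of `X1` and `X2`: the prerequisites of `r2` are derived by `R0`, so they hold in `X1`, and in
`X1` the rule `r2` is blocked only by `head r1`, which no rule of `R0` derives. Because the
fact `r1 ≺ r2` holds in `Y`, the control literal `ok(n_{r1})` needs `ok'(n_{r1}, n_{r2})`, that
is, `r2` applied or blocked in `Y`. Applying it is impossible, and blocking it needs `head r1`,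
which in turn needs `ap(n_{r1})` and hence `ok(n_{r1})`. These literals form an unfounded set,
so `head r1 ∉ Y`, contradicting `head r1 ∈ X1`.
-/

section AnswerSets

variable {σ : Type} {Q : Set (Rule σ)} {X Y : Set (Lit σ)}

theorem Consistent.mono (hY : Consistent Y) (h : X ⊆ Y) : Consistent X :=
  fun a ha => hY a ⟨h ha.1, h ha.2⟩

theorem logClosed_Th (Q : Set (Rule σ)) : LogClosed (Th Q) := by
  by_cases h : ∃ X, (LogClosed X ∧ ClosedUnder Q X) ∧ Consistent X
  · obtain ⟨X, hX, hc⟩ := h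
    exact Or.inl (hc.mono (Set.sInter_subset_of_mem hX))
  · refine Or.inr (Set.eq_univ_of_forall fun L => Set.mem_sInter.2 fun X hX => ?_)
    rcases hX.1 with hc | rfl
    · exact absurd ⟨X, hX, hc⟩ h
    · trivial

theorem closedUnder_Th (Q : Set (Rule σ)) : ClosedUnder Q (Th Q) :=
  fun r hr hb => Set.mem_sInter.2 fun _ hX => hX.2 r hr (hb.trans (Set.sInter_subset_of_mem hX))

theorem AnswerSet.logClosed (h : AnswerSet Q Y) : LogClosed Y :=
  h ▸ logClosed_Th _

theorem AnswerSet.subset_of_closedUnder (h : AnswerSet Q Y) (hX : LogClosed X)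
    (hcl : ClosedUnder (Reduct Q Y) X) : Y ⊆ X :=
  h ▸ Set.sInter_subset_of_mem ⟨hX, hcl⟩

theorem AnswerSet.head_mem {r : Rule σ} (h : AnswerSet Q Y) (hr : r ∈ Q) (hnd : ¬ Defeated r Y)
    (hb : r.pbody ⊆ Y) : r.head ∈ Y :=
  h ▸ closedUnder_Th _ (reductRule r) ⟨r, hr, hnd, rfl⟩ (h.symm ▸ hb)

theorem AnswerSet.head_mem_of_mem_GR {r : Rule σ} (h : AnswerSet Q Y) (hr : r ∈ GR Q Y) :
    r.head ∈ Y :=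
  h.head_mem hr.1 hr.2.1 hr.2.2

theorem AnswerSet.disjoint_of_unfounded (h : AnswerSet Q Y) (hc : Consistent Y)
    {U : Set (Lit σ)} (hU : ∀ r ∈ GR Q Y, r.head ∈ U → (r.pbody ∩ U).Nonempty) :
    Disjoint Y U := by
  have hsub : Y ⊆ Y \ U := by
    refine h.subset_of_closedUnder (Or.inl (hc.mono Set.sdiff_subset)) ?_
    rintro _ ⟨r, hr, hnd, rfl⟩ hb
    have hrGR : r ∈ GR Q Y := ⟨hr, hnd, hb.trans Set.sdiff_subset⟩
    refine ⟨(h.head_mem_of_mem_GR hrGR : r.head ∈ Y), fun hU' => ?_⟩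
    obtain ⟨L, hLb, hLU⟩ := hU r hrGR hU'
    exact (hb hLb).2 hLU
  exact Set.disjoint_left.2 fun L hL => (hsub hL).2

theorem AnswerSet.exists_mem_GR_head_eq (h : AnswerSet Q Y) (hc : Consistent Y) {L : Lit σ}
    (hL : L ∈ Y) : ∃ r ∈ GR Q Y, r.head = L := by
  by_contra! hno
  refine Set.disjoint_left.1 (h.disjoint_of_unfounded hc (U := {L}) ?_) hL rfl
  exact fun r hr hh => absurd hh (hno r hr)

/-- Otherwise `{L}` would be unfounded. -/
theorem AnswerSet.exists_mem_GR_ne_head_eq (h : AnswerSet Q Y) (hc : Consistent Y)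
    {r : Rule σ} (hr : r ∈ GR Q Y) {L : Lit σ} (hL : L ∈ r.pbody) :
    ∃ g ∈ GR Q Y, g ≠ r ∧ g.head = L := by
  by_contra! hno
  refine Set.disjoint_left.1 (h.disjoint_of_unfounded hc (U := {L}) ?_) (hr.2.2 hL) rfl
  intro g hg hgL
  obtain rfl : g = r := by_contra fun hne => hno g hg hne hgL
  exact ⟨L, hL, rfl⟩

/-- An inconsistent answer set is contained in every answer set. -/
theorem AnswerSet.consistent_of_consistent {X' : Set (Lit σ)} (h : AnswerSet Q Y)
    (h' : AnswerSet Q X') (hc' : Consistent X') : Consistent Y := by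
  refine h.logClosed.elim id fun hY => hc'.mono ?_
  refine h.subset_of_closedUnder (Or.inl hc') ?_
  rintro _ ⟨r, hr, hnd, rfl⟩ hb
  exact (h'.head_mem hr (fun ⟨L, hL, _⟩ => hnd ⟨L, hL, hY ▸ trivial⟩) hb : r.head ∈ X')

end AnswerSets

section TwoAnswerSets

variable {σ : Type} {P R0 : Set (Rule σ)} {r1 r2 : Rule σ} {X1 X2 : Set (Lit σ)}

theorem pbody_subset_of_GR_eq (hA1 : AnswerSet P X1) (hA2 : AnswerSet P X2)
    (hc2 : Consistent X2) (hR0 : R0 ⊆ GR P X1) (hG2 : GR P X2 = R0 ∪ {r2}) :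
    r2.pbody ⊆ X1 := by
  intro L hL
  obtain ⟨g, hg, hne, rfl⟩ := hA2.exists_mem_GR_ne_head_eq hc2 (hG2 ▸ Or.inr rfl) hL
  rw [hG2] at hg
  exact hA1.head_mem_of_mem_GR (hR0 (hg.resolve_right hne))

theorem eq_head_of_mem_nbody (hA1 : AnswerSet P X1) (hc1 : Consistent X1)
    (hA2 : AnswerSet P X2) (hG1 : GR P X1 = R0 ∪ {r1}) (hR0 : R0 ⊆ GR P X2)
    (hr2 : r2 ∈ GR P X2) {L : Lit σ} (hLn : L ∈ r2.nbody) (hL : L ∈ X1) : L = r1.head := by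
  obtain ⟨g, hg, rfl⟩ := hA1.exists_mem_GR_head_eq hc1 hL
  rw [hG1] at hg
  rcases hg with hg | rfl
  · exact absurd ⟨_, hLn, hA2.head_mem_of_mem_GR (hR0 hg)⟩ hr2.2.1
  · rfl

/-- Since `r2` is applicable but not generating for `X1`, it is blocked by a literal of `X1`,
which must be the head of `r1`; so no rule of `R0` can derive that head. -/
theorem eq_of_mem_GR_of_head_eq (hA1 : AnswerSet P X1) (hc1 : Consistent X1)
    (hA2 : AnswerSet P X2) (hG1 : GR P X1 = R0 ∪ {r1}) (hG2 : GR P X2 = R0 ∪ {r2})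
    (hr2 : r2 ∈ P) (hr2X1 : r2 ∉ GR P X1) (hpb : r2.pbody ⊆ X1) {g : Rule σ}
    (hg : g ∈ GR P X1) (hgh : g.head = r1.head) : g = r1 := by
  have hR0 : R0 ⊆ GR P X2 := hG2 ▸ Set.subset_union_left
  have hr2G : r2 ∈ GR P X2 := hG2 ▸ Or.inr rfl
  obtain ⟨L, hLn, hL⟩ : Defeated r2 X1 := by
    by_contra hnd; exact hr2X1 ⟨hr2, hnd, hpb⟩
  obtain rfl := eq_head_of_mem_nbody hA1 hc1 hA2 hG1 hR0 hr2G hLn hL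
  rw [hG1] at hg
  exact hg.resolve_left fun hgR =>
    hr2G.2.1 ⟨g.head, hgh ▸ hLn, hA2.head_mem_of_mem_GR (hR0 hgR)⟩

end TwoAnswerSets

section TranslationHeads

variable {α N : Type} {Pr : OProgram α N} {ρ : Rule (XAtom α N)}

@[simp] theorem embLit_ne_ap (L : Lit (OAtom α N)) (s : N) : embLit L ≠ .pos (.ap s) := by
  rcases L with (a | ⟨u, v⟩) | (a | ⟨u, v⟩) <;> simp [embLit, Lit.map, embAtom]

@[simp] theorem embLit_ne_bl (L : Lit (OAtom α N)) (s : N) : embLit L ≠ .pos (.bl s) := by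
  rcases L with (a | ⟨u, v⟩) | (a | ⟨u, v⟩) <;> simp [embLit, Lit.map, embAtom]

@[simp] theorem embLit_ne_ok (L : Lit (OAtom α N)) (s : N) : embLit L ≠ .pos (.ok s) := by
  rcases L with (a | ⟨u, v⟩) | (a | ⟨u, v⟩) <;> simp [embLit, Lit.map, embAtom]

@[simp] theorem embLit_ne_ok2 (L : Lit (OAtom α N)) (s t : N) :
    embLit L ≠ .pos (.ok2 s t) := by
  rcases L with (a | ⟨u, v⟩) | (a | ⟨u, v⟩) <;> simp [embLit, Lit.map, embAtom]

theorem embLit_injective : Function.Injective (embLit (α := α) (N := N)) := by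
  rintro ((a | ⟨s, t⟩) | (a | ⟨s, t⟩)) ((b | ⟨u, v⟩) | (b | ⟨u, v⟩)) h <;>
    simp_all [embLit, Lit.map, embAtom]

theorem eq_a2_of_head_eq_ap (hρ : ρ ∈ Tsl Pr) {s : N} (h : ρ.head = .pos (.ap s)) :
    ∃ g ∈ Pr.rules, Pr.nm g = s ∧ ρ = a2 Pr.nm g := by
  obtain ⟨g, hg, h' | h' | h' | ⟨L, -, h'⟩ | ⟨L, -, h'⟩ |
    ⟨g', -, h' | h' | h' | h' | ⟨g'', -, h'⟩⟩⟩ := hρ <;> subst h' <;>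
    try (simp [a1, c1, b1, b2, c2, c3, c4, asR, trR, pLit] at h)
  exact ⟨g, hg, by simpa [a2] using h, rfl⟩

theorem eq_c1_of_head_eq_ok (hρ : ρ ∈ Tsl Pr) {s : N} (h : ρ.head = .pos (.ok s)) :
    ∃ g ∈ Pr.rules, Pr.nm g = s ∧ ρ = c1 Pr.rules Pr.nm g := by
  obtain ⟨g, hg, h' | h' | h' | ⟨L, -, h'⟩ | ⟨L, -, h'⟩ |
    ⟨g', -, h' | h' | h' | h' | ⟨g'', -, h'⟩⟩⟩ := hρ <;> subst h' <;>
    try (simp [a1, a2, b1, b2, c2, c3, c4, asR, trR, pLit] at h)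
  exact ⟨g, hg, by simpa [c1] using h, rfl⟩

theorem eq_b1_or_b2_of_head_eq_bl (hρ : ρ ∈ Tsl Pr) {s : N} (h : ρ.head = .pos (.bl s)) :
    ∃ g ∈ Pr.rules, Pr.nm g = s ∧
      ((∃ L ∈ g.pbody, ρ = b1 Pr.nm g L) ∨ ∃ L ∈ g.nbody, ρ = b2 Pr.nm g L) := by
  obtain ⟨g, hg, h' | h' | h' | ⟨L, hL, h'⟩ | ⟨L, hL, h'⟩ |
    ⟨g', -, h' | h' | h' | h' | ⟨g'', -, h'⟩⟩⟩ := hρ <;> subst h' <;>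
    try (simp [a1, a2, c1, c2, c3, c4, asR, trR, pLit] at h)
  · exact ⟨g, hg, by simpa [b1] using h, Or.inl ⟨L, hL, rfl⟩⟩
  · exact ⟨g, hg, by simpa [b2] using h, Or.inr ⟨L, hL, rfl⟩⟩

theorem eq_c2_or_c3_or_c4_of_head_eq_ok2 (hρ : ρ ∈ Tsl Pr) {s t : N}
    (h : ρ.head = .pos (.ok2 s t)) :
    ∃ g ∈ Pr.rules, ∃ g' ∈ Pr.rules, Pr.nm g = s ∧ Pr.nm g' = t ∧
      (ρ = c2 Pr.nm g g' ∨ ρ = c3 Pr.nm g g' ∨ ρ = c4 Pr.nm g g') := by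
  obtain ⟨g, hg, h' | h' | h' | ⟨L, -, h'⟩ | ⟨L, -, h'⟩ |
    ⟨g', hg', h' | h' | h' | h' | ⟨g'', -, h'⟩⟩⟩ := hρ <;> subst h' <;>
    try (simp [a1, a2, c1, b1, b2, asR, trR, pLit] at h)
  all_goals
    obtain ⟨rfl, rfl⟩ : Pr.nm g = s ∧ Pr.nm g' = t := by simpa [c2, c3, c4] using h
    exact ⟨g, hg, g', hg', rfl, rfl, by simp⟩

theorem eq_a1_or_trR_of_head_eq_pLit (hρ : ρ ∈ Tsl Pr) {s t : N} (h : ρ.head = pLit s t) :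
    ∃ g ∈ Pr.rules, (g.head = .pos (.inr (s, t)) ∧ ρ = a1 Pr.nm g) ∨
      (Pr.nm g = s ∧ ∃ g' ∈ Pr.rules, ∃ g'' ∈ Pr.rules, Pr.nm g'' = t ∧
        ρ = trR Pr.nm g g' g'') := by
  obtain ⟨g, hg, h' | h' | h' | ⟨L, -, h'⟩ | ⟨L, -, h'⟩ |
    ⟨g', hg', h' | h' | h' | h' | ⟨g'', hg'', h'⟩⟩⟩ := hρ <;> subst h' <;>
    try (simp [a2, c1, b1, b2, c2, c3, c4, asR, pLit] at h)
  · exact ⟨g, hg, Or.inl ⟨embLit_injective h, rfl⟩⟩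
  · obtain ⟨rfl, rfl⟩ : Pr.nm g = s ∧ Pr.nm g'' = t := by simpa [trR, pLit] using h
    exact ⟨g, hg, Or.inr ⟨rfl, g', hg', g'', hg'', rfl, rfl⟩⟩

theorem eq_a1_of_head_eq_embLit (hρ : ρ ∈ Tsl Pr) {L : Lit (OAtom α N)} (hL : PrecFree L)
    (h : ρ.head = embLit L) : ∃ g ∈ Pr.rules, g.head = L ∧ ρ = a1 Pr.nm g := by
  obtain ⟨a, rfl | rfl⟩ := hL <;>
  obtain ⟨g, hg, h' | h' | h' | ⟨L, -, h'⟩ | ⟨L, -, h'⟩ |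
    ⟨g', hg', h' | h' | h' | h' | ⟨g'', hg'', h'⟩⟩⟩ := hρ <;> subst h' <;>
    try (simp [a2, c1, b1, b2, c2, c3, c4, asR, trR, pLit, embLit, Lit.map, embAtom] at h)
  all_goals exact ⟨g, hg, embLit_injective h, rfl⟩

end TranslationHeads

theorem AnswerSet.embLit_head_mem_of_fact {α N : Type} {Pr : OProgram α N}
    {Y : Set (Lit (XAtom α N))} (hY : AnswerSet (Tsl Pr) Y) {f : Rule (OAtom α N)}
    (hf : f ∈ Pr.rules) (hfp : f.pbody = ∅) (hfn : f.nbody = ∅)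
    (hprec : ∀ t, pLit (Pr.nm f) t ∉ Y) : embLit f.head ∈ Y := by
  have hok2 : ∀ g ∈ Pr.rules, Lit.pos (.ok2 (Pr.nm f) (Pr.nm g)) ∈ Y := fun g hg =>
    hY.head_mem ⟨f, hf, .inr (.inr (.inr (.inr (.inr ⟨g, hg, .inl rfl⟩))))⟩
      (fun ⟨_, rfl, hL⟩ => hprec _ hL) (Set.empty_subset _)
  have hok : Lit.pos (.ok (Pr.nm f)) ∈ Y :=
    hY.head_mem ⟨f, hf, .inr (.inr (.inl rfl))⟩ (by simp [Defeated, c1])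
      (by rintro _ ⟨g, hg, rfl⟩; exact hok2 g hg)
  have hap : Lit.pos (.ap (Pr.nm f)) ∈ Y :=
    hY.head_mem ⟨f, hf, .inr (.inl rfl)⟩ (by simp [Defeated, a2, hfn]) (by simp [a2, hfp, hok])
  exact hY.head_mem ⟨f, hf, .inl rfl⟩ (by simp [Defeated, a1]) (by simpa [a1] using hap)

section StaticPreferences

variable {α N : Type} {P : Set (Rule (OAtom α N))}
  {lt : Rule (OAtom α N) → Rule (OAtom α N) → Prop} {nm : Rule (OAtom α N) → N}
  {hinj : Set.InjOn nm (P ∪ {s | ∃ r ∈ P, ∃ r' ∈ P, lt r r' ∧ s = precFact nm r r'})}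
  {Y : Set (Lit (XAtom α N))} {r1 r2 : Rule (OAtom α N)}

theorem not_precFree_pos_inr (s t : N) : ¬ PrecFree (α := α) (.pos (.inr (s, t))) := by
  rintro ⟨a, h | h⟩ <;> simp at h

theorem mem_of_mem_statProgram_of_precFree_head {g : Rule (OAtom α N)}
    (hg : g ∈ (statProgram P lt nm hinj).rules) (hh : PrecFree g.head) : g ∈ P := by
  rcases hg with hg | ⟨u, -, u', -, -, rfl⟩
  exacts [hg, absurd hh (not_precFree_pos_inr _ _)]

/-- The preference facts are the only rules of the ordered program outside `P`; a preference
literal `n_f ≺ t` naming one of them in first position is unfounded. -/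
theorem pLit_nm_not_mem (hpf : ∀ r ∈ P, PrecFreeRule r)
    (hY : AnswerSet (Tsl (statProgram P lt nm hinj)) Y) (hYc : Consistent Y)
    {f : Rule (OAtom α N)} (hf : f ∈ (statProgram P lt nm hinj).rules) (hfP : f ∉ P) (t : N) :
    pLit (nm f) t ∉ Y := by
  intro hmem
  refine Set.disjoint_left.1 (hY.disjoint_of_unfounded hYc
    (U := {L | ∃ t, L = pLit (nm f) t}) ?_) hmem ⟨t, rfl⟩
  rintro ρ ⟨hρ, -, -⟩ ⟨t, ht⟩
  obtain ⟨g, hg, ⟨hgh, -⟩ | ⟨hgn, g', -, g'', -, -, rfl⟩⟩ :=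
    eq_a1_or_trR_of_head_eq_pLit hρ ht
  · rcases hg with hg | ⟨u, hu, u', -, -, rfl⟩
    · exact absurd (hgh ▸ (hpf g hg).1) (not_precFree_pos_inr _ _)
    · obtain rfl : u = f :=
        hinj (Or.inl hu) hf (congrArg Prod.fst (Sum.inr_injective (Lit.pos.inj hgh)))
      exact absurd hu hfP
  · exact ⟨_, Set.mem_insert _ _, nm g', by rw [← hgn]; rfl⟩

theorem pLit_mem_of_lt (hpf : ∀ r ∈ P, PrecFreeRule r)
    (hY : AnswerSet (Tsl (statProgram P lt nm hinj)) Y) (hYc : Consistent Y)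
    (hr1 : r1 ∈ P) (hr2 : r2 ∈ P) (hlt : lt r1 r2) : pLit (nm r1) (nm r2) ∈ Y := by
  have hf : precFact nm r1 r2 ∈ (statProgram P lt nm hinj).rules :=
    Or.inr ⟨r1, hr1, r2, hr2, hlt, rfl⟩
  have hfP : precFact nm r1 r2 ∉ P := fun h => not_precFree_pos_inr _ _ (hpf _ h).1
  exact hY.embLit_head_mem_of_fact hf rfl rfl (pLit_nm_not_mem hpf hY hYc hf hfP)

theorem mem_GR_of_a2 (hpf : ∀ r ∈ P, PrecFreeRule r) {g : Rule (OAtom α N)} (hg : g ∈ P)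
    (hnd : ¬ Defeated (a2 nm g) Y) (hb : (a2 nm g).pbody ⊆ Y) :
    g ∈ GR P {L | PrecFree L ∧ embLit L ∈ Y} :=
  ⟨hg, fun ⟨L, hLn, hL⟩ => hnd ⟨embLit L, ⟨L, hLn, rfl⟩, hL.2⟩,
    fun L hL => ⟨(hpf g hg).2.1 L hL, hb (Set.mem_insert_of_mem _ ⟨L, hL, rfl⟩)⟩⟩

theorem mem_GR_of_ap_mem (hpf : ∀ r ∈ P, PrecFreeRule r)
    (hY : AnswerSet (Tsl (statProgram P lt nm hinj)) Y) (hYc : Consistent Y)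
    {g : Rule (OAtom α N)} (hg : g ∈ P) (hap : Lit.pos (.ap (nm g)) ∈ Y) :
    g ∈ GR P {L | PrecFree L ∧ embLit L ∈ Y} := by
  obtain ⟨ρ, ⟨hρ, hnd, hb⟩, hh⟩ := hY.exists_mem_GR_head_eq hYc hap
  obtain ⟨g', hg', hnm, rfl⟩ := eq_a2_of_head_eq_ap hρ hh
  obtain rfl := hinj hg' (Or.inl hg) hnm
  exact mem_GR_of_a2 hpf hg hnd hb

theorem embLit_head_not_mem (hpf : ∀ r ∈ P, PrecFreeRule r)
    (hY : AnswerSet (Tsl (statProgram P lt nm hinj)) Y) (hYc : Consistent Y)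
    (hr1 : r1 ∈ P) (hr2 : r2 ∈ P) (hprec : pLit (nm r1) (nm r2) ∈ Y)
    (hpb : r2.pbody ⊆ {L | PrecFree L ∧ embLit L ∈ Y})
    (hnb : ∀ L ∈ r2.nbody, L ∈ {L | PrecFree L ∧ embLit L ∈ Y} → L = r1.head)
    (hr2X : r2 ∉ GR P {L | PrecFree L ∧ embLit L ∈ Y})
    (huniq : ∀ g ∈ GR P {L | PrecFree L ∧ embLit L ∈ Y}, g.head = r1.head → g = r1) :
    embLit r1.head ∉ Y := by
  intro hmem
  refine Set.disjoint_left.1 (hY.disjoint_of_unfounded hYc (U := {.pos (.ap (nm r1)),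
    .pos (.ok (nm r1)), .pos (.ok2 (nm r1) (nm r2)), .pos (.bl (nm r2)), .pos (.ap (nm r2)),
    embLit r1.head}) ?_) hmem (by simp)
  rintro ρ ⟨hρ, hnd, hb⟩ hh
  simp only [Set.mem_insert_iff, Set.mem_singleton_iff] at hh
  rcases hh with hh | hh | hh | hh | hh | hh
  · obtain ⟨g, -, hgn, rfl⟩ := eq_a2_of_head_eq_ap hρ hh
    exact ⟨_, Set.mem_insert _ _, by rw [hgn]; simp⟩
  · obtain ⟨g, -, hgn, rfl⟩ := eq_c1_of_head_eq_ok hρ hh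
    exact ⟨_, ⟨r2, Or.inl hr2, rfl⟩, by rw [hgn]; exact Or.inr (Or.inr (Or.inl rfl))⟩
  · obtain ⟨g, -, g', -, hgn, hgn', rfl | rfl | rfl⟩ :=
      eq_c2_or_c3_or_c4_of_head_eq_ok2 hρ hh
    · exact absurd ⟨_, rfl, by rwa [hgn, hgn']⟩ hnd
    · exact ⟨_, Set.mem_insert_of_mem _ rfl, by rw [hgn']; simp⟩
    · exact ⟨_, Set.mem_insert_of_mem _ rfl, by rw [hgn']; simp⟩
  · obtain ⟨g, hg, hgn, ⟨L, hL, rfl⟩ | ⟨L, hL, rfl⟩⟩ :=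
      eq_b1_or_b2_of_head_eq_bl hρ hh <;> obtain rfl := hinj hg (Or.inl hr2) hgn
    · exact absurd ⟨_, rfl, (hpb hL).2⟩ hnd
    · have hLX : L ∈ {L | PrecFree L ∧ embLit L ∈ Y} :=
        ⟨(hpf g hr2).2.2 L hL, hb (Set.mem_insert_of_mem _ rfl)⟩
      exact ⟨embLit L, Set.mem_insert_of_mem _ rfl, by simp [hnb L hL hLX]⟩
  · obtain ⟨g, hg, hgn, rfl⟩ := eq_a2_of_head_eq_ap hρ hh
    obtain rfl := hinj hg (Or.inl hr2) hgn
    exact absurd (mem_GR_of_a2 hpf hr2 hnd hb) hr2X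
  · obtain ⟨g, hg, hgh, rfl⟩ := eq_a1_of_head_eq_embLit hρ (hpf r1 hr1).1 hh
    have hgP : g ∈ P := mem_of_mem_statProgram_of_precFree_head hg (hgh ▸ (hpf r1 hr1).1)
    obtain rfl := huniq g (mem_GR_of_ap_mem hpf hY hYc hgP (hb rfl)) hgh
    exact ⟨_, rfl, by simp [statProgram]⟩

end StaticPreferences

theorem principleI_general {α N : Type}
    (P : Set (Rule (OAtom α N))) (hpf : ∀ r ∈ P, PrecFreeRule r)
    (lt : Rule (OAtom α N) → Rule (OAtom α N) → Prop)
    (hirr : ∀ r, ¬ lt r r)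
    (nm : Rule (OAtom α N) → N)
    (hinj : Set.InjOn nm
      (P ∪ {s | ∃ r ∈ P, ∃ r' ∈ P, lt r r' ∧ s = precFact nm r r'}))
    (R0 : Set (Rule (OAtom α N))) (r1 r2 : Rule (OAtom α N))
    (hr1 : r1 ∈ P) (hr2 : r2 ∈ P) (h2R : r2 ∉ R0)
    (X1 X2 : Set (Lit (OAtom α N)))
    (hA1 : AnswerSet P X1) (hA2 : AnswerSet P X2)
    (hG1 : GR P X1 = R0 ∪ {r1}) (hG2 : GR P X2 = R0 ∪ {r2})
    (hlt : lt r1 r2) :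
    ¬ StatPreferredAS P lt nm hinj X1 := by
  rintro ⟨Y, hY, rfl⟩
  set X1 := {L | PrecFree L ∧ embLit L ∈ Y}
  obtain ⟨a, -⟩ := (hpf r1 hr1).1
  have hc1 : Consistent X1 := hA1.logClosed.resolve_right fun h => by
    have hprec : Lit.pos (.inr (nm r1, nm r1)) ∈ X1 := h ▸ trivial
    exact not_precFree_pos_inr _ _ hprec.1
  have hYc : Consistent Y := hY.logClosed.resolve_right fun h =>
    hc1 (.inl a) ⟨⟨⟨a, .inl rfl⟩, h ▸ trivial⟩, ⟨a, .inr rfl⟩, h ▸ trivial⟩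
  have hc2 : Consistent X2 := hA2.consistent_of_consistent hA1 hc1
  have hr2X1 : r2 ∉ GR P X1 := by
    rw [hG1]
    rintro (h | rfl)
    exacts [h2R h, hirr r2 hlt]
  have hpb := pbody_subset_of_GR_eq hA1 hA2 hc2 (hG1 ▸ Set.subset_union_left) hG2
  refine embLit_head_not_mem hpf hY hYc hr1 hr2 (pLit_mem_of_lt hpf hY hYc hr1 hr2 hlt) hpb
    (fun L => eq_head_of_mem_nbody hA1 hc1 hA2 hG1 (hG2 ▸ Set.subset_union_left)
      (hG2 ▸ Or.inr rfl)) hr2X1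
    (fun g => eq_of_mem_GR_of_head_eq hA1 hc1 hA2 hG1 hG2 hr2 hr2X1 hpb) ?_
  exact (hA1.head_mem_of_mem_GR (hG1 ▸ Or.inr rfl)).2

/-- Principle I for statically ordered programs. -/
theorem principleI {α N : Type}
    (P : Set (Rule (OAtom α N))) (hpf : ∀ r ∈ P, PrecFreeRule r)
    (lt : Rule (OAtom α N) → Rule (OAtom α N) → Prop)
    (hirr : ∀ r, ¬ lt r r) (htr : Transitive lt)
    (nm : Rule (OAtom α N) → N)
    (hinj : Set.InjOn nm
      (P ∪ {s | ∃ r ∈ P, ∃ r' ∈ P, lt r r' ∧ s = precFact nm r r'}))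
    (R0 : Set (Rule (OAtom α N))) (r1 r2 : Rule (OAtom α N))
    (hr1 : r1 ∈ P) (hr2 : r2 ∈ P) (h1R : r1 ∉ R0) (h2R : r2 ∉ R0)
    (X1 X2 : Set (Lit (OAtom α N)))
    (hA1 : AnswerSet P X1) (hA2 : AnswerSet P X2)
    (hG1 : GR P X1 = R0 ∪ {r1}) (hG2 : GR P X2 = R0 ∪ {r2})
    (hlt : lt r1 r2) :
    ¬ StatPreferredAS P lt nm hinj X1 :=
  principleI_general P hpf lt hirr nm hinj R0 r1 r2 hr1 hr2 h2R X1 X2 hA1 hA2 hG1 hG2 hlt
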